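/- Let (g,φ) be a torsionless Heterotic soliton on a 3-manifold with harmonic curvature (d_∇*R = 0). Then at every point where dφ ≠ 0, the Ricci tensor satisfies Ric = (s/2)(g − u⊗u), where u = dφ/|dφ|; in particular Ric(dφ) = 0 and |Ric|² = s²/2 at such points. -/
import Mathlib


/-- Components of the metric in an orthonormal frame. -/
def gδ (i j : Fin 3) : ℝ := if i = j then 1 else 0

set_option maxHeartbeats 2000000 in
/-- Let `(g,φ)` be a torsionless Heterotic soliton on a 3-manifold with harmonic
curvature (`d_∇*R = 0`).  Then at every point where `dφ ≠ 0` the Ricci tensor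
satisfies `Ric = (s/2)(g - u⊗u)` with `u = dφ/|dφ|`; in particular
`Ric(dφ) = 0` and `|Ric|² = s²/2` at such points.

Formulation: fields in a pointwise orthonormal frame over `M`.  `R` is the
Riemann tensor with its symmetries, `Ric` its Ricci contraction, `s` the scalar
curvature, `dφ` the differential of the dilaton, `ds` the differential of `s`,
and `divR = d_∇*R`.  `hBianchiTr` is the once-traced contracted second Bianchi
identity, `hYM` the Yang–Mills equation `d_∇*R + R(dφ) = 0` of the system, and
`hHarmonic` the harmonic-curvature condition. -/
theorem harmonic_soliton_ricci_structure (M : Type*)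
    (R : M → Fin 3 → Fin 3 → Fin 3 → Fin 3 → ℝ)
    (hA1 : ∀ x a b c d, R x b a c d = - R x a b c d)
    (hA2 : ∀ x a b c d, R x a b d c = - R x a b c d)
    (hPair : ∀ x a b c d, R x a b c d = R x c d a b)
    (hBianchi : ∀ x a b c d, R x a b c d + R x b c a d + R x c a b d = 0)
    (Ric : M → Fin 3 → Fin 3 → ℝ)
    (hRic : ∀ x i j, Ric x i j = ∑ k, R x k i j k)
    (s : M → ℝ) (hs : ∀ x, s x = ∑ i, Ric x i i)
    (dφ ds : M → Fin 3 → ℝ)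
    (divR : M → Fin 3 → Fin 3 → Fin 3 → ℝ)
    (hBianchiTr : ∀ x c, (∑ i, divR x i i c) = -(1/2) * ds x c)
    (hYM : ∀ x a b c, divR x a b c + ∑ i, dφ x i * R x i a b c = 0)
    (hHarmonic : ∀ x a b c, divR x a b c = 0) :
    ∀ x, dφ x ≠ 0 →
      (∀ i j, Ric x i j = (s x / 2) *
        (gδ i j - (dφ x i / Real.sqrt (∑ k, (dφ x k)^2))
                * (dφ x j / Real.sqrt (∑ k, (dφ x k)^2)))) ∧
      (∀ i, (∑ j, Ric x i j * dφ x j) = 0) ∧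
      (∑ i, ∑ j, (Ric x i j)^2) = (s x)^2 / 2 := by
  intro x hx
  set v : Fin 3 → ℝ := dφ x with hv
  obtain ⟨m, hm⟩ := Function.ne_iff.mp hx
  have hm' : v m ≠ 0 := by simpa using hm
  have hm2 : 0 < v m ^ 2 := lt_of_le_of_ne (sq_nonneg _) (Ne.symm (pow_ne_zero 2 hm'))
  have hsum : (∑ k, (v k) ^ 2) = v 0 ^ 2 + v 1 ^ 2 + v 2 ^ 2 := Fin.sum_univ_three _
  have hn : (0:ℝ) < v 0 ^ 2 + v 1 ^ 2 + v 2 ^ 2 := by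
    rw [← hsum]
    exact Finset.sum_pos' (fun i _ => sq_nonneg _) ⟨m, Finset.mem_univ m, hm2⟩
  have hvr : ∀ b c d, v 0 * R x 0 b c d + v 1 * R x 1 b c d + v 2 * R x 2 b c d = 0 := by
    intro b c d
    have h := hYM x b c d
    rw [hHarmonic] at h
    rw [Fin.sum_univ_three] at h
    linarith
  -- Ricci components
  have R00 : Ric x 0 0 = -(R x 0 1 0 1) - R x 0 2 0 2 := by
    rw [hRic, Fin.sum_univ_three]
    linear_combination (1/2) * hA1 x 0 0 0 0 + hA1 x 0 1 0 1 + hA1 x 0 2 0 2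
  have R11 : Ric x 1 1 = -(R x 0 1 0 1) - R x 1 2 1 2 := by
    rw [hRic, Fin.sum_univ_three]
    linear_combination hA2 x 0 1 0 1 + (1/2) * hA1 x 1 1 1 1 + hA1 x 1 2 1 2
  have R22 : Ric x 2 2 = -(R x 0 2 0 2) - R x 1 2 1 2 := by
    rw [hRic, Fin.sum_univ_three]
    linear_combination hA2 x 0 2 0 2 + hA2 x 1 2 1 2 + (1/2) * hA1 x 2 2 2 2
  have R01 : Ric x 0 1 = -(R x 0 2 1 2) := by
    rw [hRic, Fin.sum_univ_three]
    linear_combination (1/2) * hA1 x 0 0 1 0 + (1/2) * hA2 x 1 0 1 1 + hA1 x 0 2 1 2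
  have R10 : Ric x 1 0 = -(R x 0 2 1 2) := by
    rw [hRic, Fin.sum_univ_three]
    linear_combination (1/2) * hA2 x 0 1 0 0 + (1/2) * hA1 x 1 1 0 1 + hPair x 2 1 0 2 + hA2 x 0 2 1 2
  have R02 : Ric x 0 2 = R x 0 1 1 2 := by
    rw [hRic, Fin.sum_univ_three]
    linear_combination (1/2) * hA1 x 0 0 2 0 + hA1 x 0 1 2 1 - hA2 x 0 1 1 2 + (1/2) * hA2 x 2 0 2 2
  have R20 : Ric x 2 0 = R x 0 1 1 2 := by
    rw [hRic, Fin.sum_univ_three]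
    linear_combination (1/2) * hA2 x 0 2 0 0 + hPair x 1 2 0 1 + (1/2) * hA1 x 2 2 0 2
  have R12 : Ric x 1 2 = -(R x 0 1 0 2) := by
    rw [hRic, Fin.sum_univ_three]
    linear_combination hA2 x 0 1 0 2 + (1/2) * hA1 x 1 1 2 1 + (1/2) * hA2 x 2 1 2 2
  have R21 : Ric x 2 1 = -(R x 0 1 0 2) := by
    rw [hRic, Fin.sum_univ_three]
    linear_combination hA2 x 0 2 0 1 - hPair x 0 2 0 1 + (1/2) * hA2 x 1 2 1 1 + (1/2) * hA1 x 2 2 1 2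
  have hsval : s x = -2 * R x 0 1 0 1 - 2 * R x 0 2 0 2 - 2 * R x 1 2 1 2 := by
    rw [hs, Fin.sum_univ_three, R00, R11, R22]; ring
  -- the nine contracted Yang-Mills equations
  have e1 : -(v 1) * R x 0 1 0 1 - v 2 * R x 0 1 0 2 = 0 := by
    linear_combination hvr 0 0 1 - (v 0/2) * hA1 x 0 0 0 1 - v 1 * hA1 x 0 1 0 1
      - v 2 * (hPair x 2 0 0 1 + hA2 x 0 1 0 2)
  have e2 : v 0 * R x 0 1 0 1 - v 2 * R x 0 1 1 2 = 0 := by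
    linear_combination hvr 1 0 1 - (v 1/2) * hA1 x 1 1 0 1 - v 2 * (hPair x 2 1 0 1 + hA2 x 0 1 1 2)
  have e3 : v 0 * R x 0 1 0 2 + v 1 * R x 0 1 1 2 = 0 := by
    linear_combination hvr 2 0 1 - v 0 * hPair x 0 2 0 1 - v 1 * hPair x 1 2 0 1
      - (v 2/2) * hA1 x 2 2 0 1
  have e4 : -(v 1) * R x 0 1 0 2 - v 2 * R x 0 2 0 2 = 0 := by
    linear_combination hvr 0 0 2 - (v 0/2) * hA1 x 0 0 0 2
      - v 1 * (hPair x 1 0 0 2 + hA2 x 0 2 0 1 - hPair x 0 2 0 1) - v 2 * hA1 x 0 2 0 2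
  have e5 : v 0 * R x 0 1 0 2 - v 2 * R x 0 2 1 2 = 0 := by
    linear_combination hvr 1 0 2 - (v 1/2) * hA1 x 1 1 0 2 - v 2 * (hPair x 2 1 0 2 + hA2 x 0 2 1 2)
  have e6 : v 0 * R x 0 2 0 2 + v 1 * R x 0 2 1 2 = 0 := by
    linear_combination hvr 2 0 2 - v 1 * hPair x 1 2 0 2 - (v 2/2) * hA1 x 2 2 0 2
  have e7 : -(v 1) * R x 0 1 1 2 - v 2 * R x 0 2 1 2 = 0 := by
    linear_combination hvr 0 1 2 - (v 0/2) * hA1 x 0 0 1 2 - v 1 * hA1 x 0 1 1 2 - v 2 * hA1 x 0 2 1 2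
  have e8 : v 0 * R x 0 1 1 2 - v 2 * R x 1 2 1 2 = 0 := by
    linear_combination hvr 1 1 2 - (v 1/2) * hA1 x 1 1 1 2 - v 2 * hA1 x 1 2 1 2
  have e9 : v 0 * R x 0 2 1 2 + v 1 * R x 1 2 1 2 = 0 := by
    linear_combination hvr 2 1 2 - (v 2/2) * hA1 x 2 2 1 2
  -- key polynomial identities
  have k00 : (R x 0 1 0 1 + R x 0 2 0 2) * v 0 ^ 2 = (v 1 ^ 2 + v 2 ^ 2) * R x 1 2 1 2 := by
    linear_combination v 0 * e2 + v 2 * e8 + v 0 * e6 - v 1 * e9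
  have k11 : (R x 0 1 0 1 + R x 1 2 1 2) * v 1 ^ 2 = (v 0 ^ 2 + v 2 ^ 2) * R x 0 2 0 2 := by
    linear_combination -(v 1) * e1 + v 2 * e4 + v 1 * e9 - v 0 * e6
  have k22 : (R x 0 2 0 2 + R x 1 2 1 2) * v 2 ^ 2 = (v 0 ^ 2 + v 1 ^ 2) * R x 0 1 0 1 := by
    linear_combination v 1 * e1 - v 2 * e4 - v 2 * e8 - v 0 * e2
  have k01 : (v 0 ^ 2 + v 1 ^ 2 + v 2 ^ 2) * R x 0 2 1 2
      = -(R x 0 1 0 1 + R x 0 2 0 2 + R x 1 2 1 2) * (v 0 * v 1) := by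
    linear_combination v 1 * e2 - v 2 * e7 + v 1 * e6 + v 0 * e9
  have k02 : (v 0 ^ 2 + v 1 ^ 2 + v 2 ^ 2) * R x 0 1 1 2
      = (R x 0 1 0 1 + R x 0 2 0 2 + R x 1 2 1 2) * (v 0 * v 2) := by
    linear_combination -(v 2) * e2 - v 2 * e6 - v 1 * e7 + v 0 * e8
  have k12 : (v 0 ^ 2 + v 1 ^ 2 + v 2 ^ 2) * R x 0 1 0 2
      = -(R x 0 1 0 1 + R x 0 2 0 2 + R x 1 2 1 2) * (v 1 * v 2) := by
    linear_combination -(v 2) * e1 - v 1 * e4 + v 2 * e9 + v 0 * e5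
  -- product of unit-vector components
  have hu : ∀ i j : Fin 3, v i / Real.sqrt (∑ k, (v k) ^ 2) * (v j / Real.sqrt (∑ k, (v k) ^ 2))
      = v i * v j / (v 0 ^ 2 + v 1 ^ 2 + v 2 ^ 2) := by
    intro i j
    rw [div_mul_div_comm, hsum, Real.mul_self_sqrt hn.le]
  have hN : (v 0 ^ 2 + v 1 ^ 2 + v 2 ^ 2) ≠ 0 := hn.ne'
  have hf00 : Ric x 0 0 = s x / 2 * (gδ 0 0 - v 0 * v 0 / (v 0 ^ 2 + v 1 ^ 2 + v 2 ^ 2)) := by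
    rw [R00, hsval]; simp [gδ]; field_simp; linarith [k00]
  have hf01 : Ric x 0 1 = s x / 2 * (gδ 0 1 - v 0 * v 1 / (v 0 ^ 2 + v 1 ^ 2 + v 2 ^ 2)) := by
    rw [R01, hsval]; simp [gδ]; field_simp; linarith [k01]
  have hf02 : Ric x 0 2 = s x / 2 * (gδ 0 2 - v 0 * v 2 / (v 0 ^ 2 + v 1 ^ 2 + v 2 ^ 2)) := by
    rw [R02, hsval]; simp [gδ]; field_simp; linarith [k02]
  have hf10 : Ric x 1 0 = s x / 2 * (gδ 1 0 - v 1 * v 0 / (v 0 ^ 2 + v 1 ^ 2 + v 2 ^ 2)) := by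
    rw [R10, hsval]; simp [gδ]; field_simp; linarith [k01]
  have hf11 : Ric x 1 1 = s x / 2 * (gδ 1 1 - v 1 * v 1 / (v 0 ^ 2 + v 1 ^ 2 + v 2 ^ 2)) := by
    rw [R11, hsval]; simp [gδ]; field_simp; linarith [k11]
  have hf12 : Ric x 1 2 = s x / 2 * (gδ 1 2 - v 1 * v 2 / (v 0 ^ 2 + v 1 ^ 2 + v 2 ^ 2)) := by
    rw [R12, hsval]; simp [gδ]; field_simp; linarith [k12]
  have hf20 : Ric x 2 0 = s x / 2 * (gδ 2 0 - v 2 * v 0 / (v 0 ^ 2 + v 1 ^ 2 + v 2 ^ 2)) := by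
    rw [R20, hsval]; simp [gδ]; field_simp; linarith [k02]
  have hf21 : Ric x 2 1 = s x / 2 * (gδ 2 1 - v 2 * v 1 / (v 0 ^ 2 + v 1 ^ 2 + v 2 ^ 2)) := by
    rw [R21, hsval]; simp [gδ]; field_simp; linarith [k12]
  have hf22 : Ric x 2 2 = s x / 2 * (gδ 2 2 - v 2 * v 2 / (v 0 ^ 2 + v 1 ^ 2 + v 2 ^ 2)) := by
    rw [R22, hsval]; simp [gδ]; field_simp; linarith [k22]
  refine ⟨?_, ?_, ?_⟩
  · intro i j
    rw [hu i j]
    fin_cases i <;> fin_cases j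
    exacts [hf00, hf01, hf02, hf10, hf11, hf12, hf20, hf21, hf22]
  · have p20 : Ric x 0 0 * v 0 + Ric x 0 1 * v 1 + Ric x 0 2 * v 2 = 0 := by
      rw [hf00, hf01, hf02]; simp [gδ]; field_simp; ring
    have p21 : Ric x 1 0 * v 0 + Ric x 1 1 * v 1 + Ric x 1 2 * v 2 = 0 := by
      rw [hf10, hf11, hf12]; simp [gδ]; field_simp; ring
    have p22 : Ric x 2 0 * v 0 + Ric x 2 1 * v 1 + Ric x 2 2 * v 2 = 0 := by
      rw [hf20, hf21, hf22]; simp [gδ]; field_simp; ring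
    intro i
    rw [Fin.sum_univ_three]
    fin_cases i
    exacts [p20, p21, p22]
  · simp only [Fin.sum_univ_three]
    rw [hf00, hf01, hf02, hf10, hf11, hf12, hf20, hf21, hf22]
    simp [gδ]
    field_simp
    ring
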